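/- Let F be a smooth Salamon (1,1)-form on a hypercomplex manifold (M,I,J,K) with DF = 0, let ∇^Ob be the Obata connection, and set G = F(J·,·). Then for all vector fields U, V, W: dF(IU, IV, IW) = ∇^Ob F(KU,KV,IW) + ∇^Ob F(KV,KW,IU) + ∇^Ob F(KW,KU,IV) = dG(KU, KV, KW); in other words I dF_I = K dF_K where F_I = F and F_K = G. -/

import Mathlib

noncomputable section

open Function

namespace HKTPaper

variable {E : Type*} [NormedAddCommGroup E] [NormedSpace ℝ E] [FiniteDimensional ℝ E]

/-- Exterior derivative of a function, in flat coordinates. -/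
def d0 (f : E → ℝ) : E → E → ℝ := fun x u => fderiv ℝ f x u

/-- Exterior derivative of a 1-form (evaluated on constant vector fields), flat coordinates. -/
def d1 (θ : E → E → ℝ) : E → E → E → ℝ := fun x u v =>
  fderiv ℝ (fun y => θ y v) x u - fderiv ℝ (fun y => θ y u) x v

/-- Exterior derivative of a 2-form, flat coordinates. -/
def d2 (F : E → E → E → ℝ) : E → E → E → E → ℝ := fun x u v w =>
  fderiv ℝ (fun y => F y v w) x u - fderiv ℝ (fun y => F y u w) x v
    + fderiv ℝ (fun y => F y u v) x w

variable {P : Type*}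

/-- Action of an almost complex structure on 1-forms: `(𝓘θ)(X) = -θ(𝓘X)`. -/
def act1 (I : P → E →L[ℝ] E) (θ : P → E → ℝ) : P → E → ℝ := fun x u => -θ x (I x u)

/-- Action of an almost complex structure on 2-forms: `(𝓘ω)(X,Y) = ω(𝓘X,𝓘Y)`. -/
def act2 (I : P → E →L[ℝ] E) (F : P → E → E → ℝ) : P → E → E → ℝ := fun x u v =>
  F x (I x u) (I x v)

/-- Action of an almost complex structure on 3-forms: `(𝓘ω)(X,Y,Z) = -ω(𝓘X,𝓘Y,𝓘Z)`. -/
def act3 (I : P → E →L[ℝ] E) (G : P → E → E → E → ℝ) : P → E → E → E → ℝ := fun x u v w =>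
  -G x (I x u) (I x v) (I x w)

/-- `d_𝓘` on functions: `d_𝓘 f = 𝓘 d (𝓘 f)`. -/
def dc0 (I : E → E →L[ℝ] E) (f : E → ℝ) : E → E → ℝ := act1 I (d0 f)

/-- `d_𝓘` on 1-forms: `d_𝓘 θ = (-1)¹ 𝓘 d (𝓘 θ)`. -/
def dc1 (I : E → E →L[ℝ] E) (θ : E → E → ℝ) : E → E → E → ℝ := fun x u v =>
  -(act2 I (d1 (act1 I θ)) x u v)

/-- Lie bracket of vector fields, flat coordinates. -/
def lieBracket (X Y : E → E) : E → E := fun x => fderiv ℝ Y x (X x) - fderiv ℝ X x (Y x)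

/-- Nijenhuis tensor `N(X,Y) = [𝓘X,𝓘Y] - 𝓘[𝓘X,Y] - 𝓘[X,𝓘Y] - [X,Y]` evaluated on the
constant vector fields with values `u`, `v`. -/
def nijTensor (I : E → E →L[ℝ] E) (u v : E) : E → E := fun x =>
  lieBracket (fun y => I y u) (fun y => I y v) x
    - I x (lieBracket (fun y => I y u) (fun _ => v) x)
    - I x (lieBracket (fun _ => u) (fun y => I y v) x)
    - lieBracket (fun _ => u) (fun _ => v) x

/-- An almost complex structure on an open set `U`. -/
structure IsAcsOn (U : Set E) (I : E → E →L[ℝ] E) : Prop where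
  smooth : ContDiffOn ℝ (⊤ : ℕ∞) I U
  square : ∀ x ∈ U, ∀ v, I x (I x v) = -v

/-- Integrability (vanishing of the Nijenhuis tensor). -/
def IntegrableOn (U : Set E) (I : E → E →L[ℝ] E) : Prop :=
  ∀ u v : E, ∀ x ∈ U, nijTensor I u v x = 0

/-- A hypercomplex structure on an open set `U`: three integrable almost complex structures
with `IJ = -JI = K`. -/
structure IsHypercomplexOn (U : Set E) (I J K : E → E →L[ℝ] E) : Prop where
  acsI : IsAcsOn U I
  acsJ : IsAcsOn U J
  acsK : IsAcsOn U K
  mulIJ : ∀ x ∈ U, ∀ v, I x (J x v) = K x v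
  mulJI : ∀ x ∈ U, ∀ v, J x (I x v) = -(K x v)
  intI : IntegrableOn U I
  intJ : IntegrableOn U J
  intK : IntegrableOn U K

/-- A hyperhermitian (possibly indefinite) metric on `U`. -/
structure IsHyperHermitianOn (U : Set E) (I J K : E → E →L[ℝ] E)
    (g : E → E →ₗ[ℝ] E →ₗ[ℝ] ℝ) : Prop where
  smooth : ∀ u v : E, ContDiffOn ℝ (⊤ : ℕ∞) (fun x => g x u v) U
  symm : ∀ x ∈ U, ∀ u v, g x u v = g x v u
  nondeg : ∀ x ∈ U, ∀ u, (∀ v, g x u v = 0) → u = 0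
  hermI : ∀ x ∈ U, ∀ u v, g x (I x u) (I x v) = g x u v
  hermJ : ∀ x ∈ U, ∀ u v, g x (J x u) (J x v) = g x u v
  hermK : ∀ x ∈ U, ∀ u v, g x (K x u) (K x v) = g x u v

/-- The Kähler form `F_𝓘 = g(𝓘·,·)`. -/
def kaehlerForm (I : E → E →L[ℝ] E) (g : E → E →ₗ[ℝ] E →ₗ[ℝ] ℝ) : E → E → E → ℝ :=
  fun x u v => g x (I x u) v

/-- The HKT condition `I dF_I = J dF_J = K dF_K` on `U`. -/
def IsHKTOn (U : Set E) (I J K : E → E →L[ℝ] E) (g : E → E →ₗ[ℝ] E →ₗ[ℝ] ℝ) : Prop :=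
  (∀ x ∈ U, ∀ u v w, act3 I (d2 (kaehlerForm I g)) x u v w
      = act3 J (d2 (kaehlerForm J g)) x u v w) ∧
  (∀ x ∈ U, ∀ u v w, act3 J (d2 (kaehlerForm J g)) x u v w
      = act3 K (d2 (kaehlerForm K g)) x u v w)

/-- `μ` is an HKT potential for `g` on `U`:
`F_I = ½(dd_I + d_J d_K)μ`, `F_J = ½(dd_J + d_K d_I)μ`, `F_K = ½(dd_K + d_I d_J)μ`. -/
def IsHKTPotentialOn (U : Set E) (I J K : E → E →L[ℝ] E)
    (g : E → E →ₗ[ℝ] E →ₗ[ℝ] ℝ) (μ : E → ℝ) : Prop :=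
  ∀ x ∈ U, ∀ u v,
    kaehlerForm I g x u v = (1 / 2) * (d1 (dc0 I μ) x u v + dc1 J (dc0 K μ) x u v) ∧
    kaehlerForm J g x u v = (1 / 2) * (d1 (dc0 J μ) x u v + dc1 K (dc0 I μ) x u v) ∧
    kaehlerForm K g x u v = (1 / 2) * (d1 (dc0 K μ) x u v + dc1 I (dc0 J μ) x u v)

end HKTPaper

namespace HKTPaper

variable {E : Type*} [NormedAddCommGroup E] [NormedSpace ℝ E] [FiniteDimensional ℝ E]

/-- The complex structure `aI + bJ + cK` at the point `x`. -/
def unitCombo (I J K : E → E →L[ℝ] E) (a b c : ℝ) (x : E) : E →L[ℝ] E :=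
  a • I x + b • J x + c • K x

/-- `D`-closedness of a `(1,1)`-form `F`: for every `𝓘 ∈ S²`,
`dF(U,V,W) = dF(𝓘U,𝓘V,W) + dF(𝓘U,V,𝓘W) + dF(U,𝓘V,𝓘W)`. -/
def DClosed2On (U : Set E) (I J K : E → E →L[ℝ] E) (F : E → E → E → ℝ) : Prop :=
  ∀ x ∈ U, ∀ a b c : ℝ, a ^ 2 + b ^ 2 + c ^ 2 = 1 → ∀ u v w,
    d2 F x u v w =
      d2 F x (unitCombo I J K a b c x u) (unitCombo I J K a b c x v) w
        + d2 F x (unitCombo I J K a b c x u) v (unitCombo I J K a b c x w)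
        + d2 F x u (unitCombo I J K a b c x v) (unitCombo I J K a b c x w)

/-- The Obata connection, recorded by its Christoffel tensor `Γ`:
`∇_u Y = D_u Y + Γ(u, Y)`. -/
structure IsObataOn (U : Set E) (I J K : E → E →L[ℝ] E)
    (Γ : E → E →L[ℝ] E →L[ℝ] E) : Prop where
  torsionFree : ∀ x ∈ U, ∀ u v, Γ x u v = Γ x v u
  parI : ∀ x ∈ U, ∀ u v, fderiv ℝ (fun y => I y v) x u + Γ x u (I x v) = I x (Γ x u v)
  parJ : ∀ x ∈ U, ∀ u v, fderiv ℝ (fun y => J y v) x u + Γ x u (J x v) = J x (Γ x u v)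
  parK : ∀ x ∈ U, ∀ u v, fderiv ℝ (fun y => K y v) x u + Γ x u (K x v) = K x (Γ x u v)

/-- Covariant derivative of a 2-form: `∇F(X,Y,Z) = (∇_X F)(Y,Z)`. -/
def covDer2 (Γ : E → E →L[ℝ] E →L[ℝ] E) (F : E → E → E → ℝ) : E → E → E → E → ℝ :=
  fun x u v w => fderiv ℝ (fun y => F y v w) x u - F x (Γ x u v) w - F x v (Γ x u w)

/-!
At a point `x`, write `P = ∇^Ob F`. As `∇^Ob` is torsion-free, `dF` is the cyclic sum of `P`;
as `∇^Ob` preserves `I` and `J`, each `P(a, ·, ·)` is `I`-invariant and `J`-anti-invariant like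
`F`. In these terms the `J`-component of `DF = 0` says that the cyclic sum of `P(Ja, b, Jc)` is
`dF(a, b, c)`; at `(IU, IV, IW)`, where `JI = -K`, it becomes the cyclic sum of `P(KU, IV, KW)`.
On the other side `∇^Ob G = P(·, J·, ·)`, so `dG(KU, KV, KW)` is the cyclic sum of
`P(KU, JKV, KW) = P(KU, IV, KW)`: the same quantity. Moving `I` and `K` across the last two slots
of `P` turns it into `P(KU, KV, IW)`.
-/

open Filter Topology

section Quaternionic

variable {V : Type*} [NormedAddCommGroup V] [NormedSpace ℝ V]

def cyclicSum {α : Type*} (T : α → α → α → ℝ) (a b c : α) : ℝ :=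
  T a b c + T b c a + T c a b

structure IsQuaternionic (i j k : V →L[ℝ] V) : Prop where
  i_i : ∀ v, i (i v) = -v
  j_j : ∀ v, j (j v) = -v
  i_j : ∀ v, i (j v) = k v
  j_i : ∀ v, j (i v) = -k v

namespace IsQuaternionic

variable {i j k : V →L[ℝ] V}

theorem i_k (hq : IsQuaternionic i j k) (v : V) : i (k v) = -j v := by
  rw [← hq.i_j, hq.i_i]

theorem k_i (hq : IsQuaternionic i j k) (v : V) : k (i v) = j v := by
  rw [← hq.i_j, hq.j_i, map_neg, hq.i_k, neg_neg]

theorem k_j (hq : IsQuaternionic i j k) (v : V) : k (j v) = -i v := by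
  rw [← hq.i_j, hq.j_j, map_neg]

theorem k_k (hq : IsQuaternionic i j k) (v : V) : k (k v) = -v := by
  rw [← hq.i_j v, hq.k_i, hq.j_j]

theorem j_k (hq : IsQuaternionic i j k) (v : V) : j (k v) = i v := by
  rw [← hq.i_j, hq.j_i, hq.k_j, neg_neg]

end IsQuaternionic

variable {P : V → V → V → ℝ}

theorem apply_swap_of_invariant {L : V →L[ℝ] V} (hL : ∀ v, L (L v) = -v) {ε : ℝ}
    (hneg : ∀ a b c, P a b (-c) = -P a b c) (hinv : ∀ a b c, P a (L b) (L c) = ε * P a b c)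
    (a b c : V) : P a (L b) c = -ε * P a b (L c) := by
  conv_lhs => rw [← neg_neg c, ← hL c, ← map_neg, hinv, hneg]
  ring

theorem cyclicSum_conj_eq_of_dClosed {j : V →L[ℝ] V} (hj : ∀ v, j (j v) = -v)
    (hneg : ∀ a b c, P a b (-c) = -P a b c) (hPj : ∀ a b c, P a (j b) (j c) = -P a b c)
    (hD : ∀ a b c, cyclicSum P a b c =
      cyclicSum P (j a) (j b) c + cyclicSum P (j a) b (j c) + cyclicSum P a (j b) (j c))
    (a b c : V) : cyclicSum (fun a b c => P (j a) b (j c)) a b c = cyclicSum P a b c := by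
  have hmove : ∀ a b c, P a (j b) c = P a b (j c) := fun a b c => by
    simpa using apply_swap_of_invariant hj hneg (ε := -1) (by simpa using hPj) a b c
  have := hD a b c
  simp only [cyclicSum, hmove, hj, hneg] at this ⊢
  linarith

namespace IsQuaternionic

variable {i j k : V →L[ℝ] V}

theorem apply_i_k_eq_apply_k_i (hq : IsQuaternionic i j k)
    (hneg : ∀ a b c, P a b (-c) = -P a b c) (hPi : ∀ a b c, P a (i b) (i c) = P a b c)
    (hPj : ∀ a b c, P a (j b) (j c) = -P a b c) (a b c : V) :
    P a (i b) (k c) = P a (k b) (i c) := by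
  have hPk : ∀ a b c, P a (k b) (k c) = -1 * P a b c := fun a b c => by
    rw [← hq.i_j, ← hq.i_j, hPi, hPj, neg_one_mul]
  rw [apply_swap_of_invariant hq.i_i hneg (ε := 1) (by simpa using hPi), hq.i_k, hneg,
    apply_swap_of_invariant hq.k_k hneg hPk, hq.k_i]
  ring

theorem cyclicSum_i_eq_of_dClosed (hq : IsQuaternionic i j k)
    (hneg₁ : ∀ a b c, P (-a) b c = -P a b c) (hneg₃ : ∀ a b c, P a b (-c) = -P a b c)
    (hPi : ∀ a b c, P a (i b) (i c) = P a b c) (hPj : ∀ a b c, P a (j b) (j c) = -P a b c)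
    (hD : ∀ a b c, cyclicSum P a b c =
      cyclicSum P (j a) (j b) c + cyclicSum P (j a) b (j c) + cyclicSum P a (j b) (j c))
    (u v w : V) :
    cyclicSum P (i u) (i v) (i w) = cyclicSum (fun a b c => P (k a) (k b) (i c)) u v w := by
  rw [← cyclicSum_conj_eq_of_dClosed hq.j_j hneg₃ hPj hD]
  simp only [cyclicSum, hq.j_i, hneg₁, hneg₃, neg_neg, hq.apply_i_k_eq_apply_k_i hneg₃ hPi hPj]

theorem cyclicSum_j_k_eq (hq : IsQuaternionic i j k)
    (hneg : ∀ a b c, P a b (-c) = -P a b c) (hPi : ∀ a b c, P a (i b) (i c) = P a b c)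
    (hPj : ∀ a b c, P a (j b) (j c) = -P a b c) (u v w : V) :
    cyclicSum (fun a b c => P a (j b) c) (k u) (k v) (k w) =
      cyclicSum (fun a b c => P (k a) (k b) (i c)) u v w := by
  simp only [cyclicSum, hq.j_k, hq.apply_i_k_eq_apply_k_i hneg hPi hPj]

end IsQuaternionic

end Quaternionic

section Calculus

variable {V W X G : Type*} [NormedAddCommGroup V] [NormedSpace ℝ V] [NormedAddCommGroup W]
  [NormedSpace ℝ W] [NormedAddCommGroup X] [NormedSpace ℝ X] [NormedAddCommGroup G]
  [NormedSpace ℝ G]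

theorem contDiffOn_toContinuousBilinearMap [FiniteDimensional ℝ W] [FiniteDimensional ℝ X]
    {n : WithTop ℕ∞} {U : Set V} {F : V → W →ₗ[ℝ] X →ₗ[ℝ] G}
    (hF : ∀ p q, ContDiffOn ℝ n (fun y => F y p q) U) :
    ContDiffOn ℝ n (fun y => (F y).toContinuousBilinearMap) U := by
  rw [contDiffOn_clm_apply]
  exact fun p => contDiffOn_clm_apply.2 (hF p)

theorem fderiv_clm_apply_apply {F : V → W →L[ℝ] X →L[ℝ] G} {α : V → W} {β : V → X} {x : V}
    (hF : DifferentiableAt ℝ F x) (hα : DifferentiableAt ℝ α x) (hβ : DifferentiableAt ℝ β x)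
    (u : V) :
    fderiv ℝ (fun y => F y (α y) (β y)) x u =
      fderiv ℝ F x u (α x) (β x) + F x (fderiv ℝ α x u) (β x) + F x (α x) (fderiv ℝ β x u) := by
  rw [fderiv_clm_apply (hF.clm_apply hα) hβ, fderiv_clm_apply hF hα]
  simp only [add_apply, ContinuousLinearMap.flip_apply, ContinuousLinearMap.comp_apply]
  abel

theorem fderiv_apply_apply_eq [FiniteDimensional ℝ W] [FiniteDimensional ℝ X]
    {F : V → W →ₗ[ℝ] X →ₗ[ℝ] G} {x : V}
    (hF : DifferentiableAt ℝ (fun y => (F y).toContinuousBilinearMap) x) (p : W) (q : X)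
    (u : V) :
    fderiv ℝ (fun y => F y p q) x u =
      fderiv ℝ (fun y => (F y).toContinuousBilinearMap) x u p q := by
  simpa using fderiv_clm_apply_apply hF (differentiableAt_const p) (differentiableAt_const q) u

end Calculus

section CovariantDerivative

variable {V : Type*} [NormedAddCommGroup V] [NormedSpace ℝ V] {Γ : V → V →L[ℝ] V →L[ℝ] V}
  {x : V}

def IsParallelAt (Γ : V → V →L[ℝ] V →L[ℝ] V) (L : V → V →L[ℝ] V) (x : V) : Prop :=
  ∀ u v, fderiv ℝ (fun y => L y v) x u + Γ x u (L x v) = L x (Γ x u v)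

theorem isParallelAt_one : IsParallelAt Γ (fun _ => 1) x := fun u v => by simp

theorem covDer2_neg_left (F : V → V →ₗ[ℝ] V →ₗ[ℝ] ℝ) (a b c : V) :
    covDer2 Γ (fun y p q => F y p q) x (-a) b c = -covDer2 Γ (fun y p q => F y p q) x a b c := by
  simp only [covDer2, map_neg, neg_apply, LinearMap.neg_apply]
  ring

theorem covDer2_neg_right (F : V → V →ₗ[ℝ] V →ₗ[ℝ] ℝ) (a b c : V) :
    covDer2 Γ (fun y p q => F y p q) x a b (-c) = -covDer2 Γ (fun y p q => F y p q) x a b c := by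
  simp only [covDer2, map_neg, fderiv_fun_neg, neg_apply]
  ring

theorem covDer2_congr {H H' : V → V → V → ℝ} (h : ∀ᶠ y in 𝓝 x, ∀ p q, H y p q = H' y p q) :
    covDer2 Γ H x = covDer2 Γ H' x := by
  ext a b c
  have hbc : (fun y => H y b c) =ᶠ[𝓝 x] fun y => H' y b c := h.mono fun y hy => hy b c
  simp only [covDer2, hbc.fderiv_eq, h.self_of_nhds]

theorem covDer2_const_mul (F : V → V →ₗ[ℝ] V →ₗ[ℝ] ℝ)
    (hF : ∀ p q, DifferentiableAt ℝ (fun y => F y p q) x) (ε : ℝ) (a b c : V) :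
    covDer2 Γ (fun y p q => ε * F y p q) x a b c =
      ε * covDer2 Γ (fun y p q => F y p q) x a b c := by
  simp only [covDer2, fderiv_const_mul (hF b c), smul_apply, smul_eq_mul]
  ring

theorem covDer2_comp_of_isParallelAt [FiniteDimensional ℝ V] {F : V → V →ₗ[ℝ] V →ₗ[ℝ] ℝ}
    (hF : DifferentiableAt ℝ (fun y => (F y).toContinuousBilinearMap) x)
    {L L' : V → V →L[ℝ] V} (hL : DifferentiableAt ℝ L x) (hL' : DifferentiableAt ℝ L' x)
    (hpL : IsParallelAt Γ L x) (hpL' : IsParallelAt Γ L' x) (a b c : V) :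
    covDer2 Γ (fun y p q => F y (L y p) (L' y q)) x a b c =
      covDer2 Γ (fun y p q => F y p q) x a (L x b) (L' x c) := by
  have hprod := fderiv_clm_apply_apply hF (hL.clm_apply (differentiableAt_const b))
    (hL'.clm_apply (differentiableAt_const c)) a
  simp only [LinearMap.toContinuousBilinearMap_apply] at hprod
  rw [eq_sub_of_add_eq (hpL a b), eq_sub_of_add_eq (hpL' a c)] at hprod
  simp only [covDer2, hprod, fderiv_apply_apply_eq hF, map_sub, LinearMap.sub_apply]
  ring

theorem covDer2_eq_mul_of_invariant [FiniteDimensional ℝ V] {F : V → V →ₗ[ℝ] V →ₗ[ℝ] ℝ}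
    (hF : DifferentiableAt ℝ (fun y => (F y).toContinuousBilinearMap) x)
    {L : V → V →L[ℝ] V} (hL : DifferentiableAt ℝ L x) (hpL : IsParallelAt Γ L x) {ε : ℝ}
    (hinv : ∀ᶠ y in 𝓝 x, ∀ p q, F y (L y p) (L y q) = ε * F y p q) (a b c : V) :
    covDer2 Γ (fun y p q => F y p q) x a (L x b) (L x c) =
      ε * covDer2 Γ (fun y p q => F y p q) x a b c := by
  have hFpq (p q : V) : DifferentiableAt ℝ (fun y => F y p q) x := by
    simpa using (hF.clm_apply (differentiableAt_const p)).clm_apply (differentiableAt_const q)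
  rw [← covDer2_comp_of_isParallelAt hF hL hL hpL hpL, covDer2_congr hinv,
    covDer2_const_mul F hFpq]

theorem d2_eq_cyclicSum_covDer2 (hΓ : ∀ u v, Γ x u v = Γ x v u) {H : V → V → V → ℝ}
    (hH : ∀ᶠ y in 𝓝 x, ∀ p q, H y p q = -H y q p) (a b c : V) :
    d2 H x a b c = cyclicSum (covDer2 Γ H x) a b c := by
  have hswap : ∀ p q r, fderiv ℝ (fun y => H y q r) x p = -fderiv ℝ (fun y => H y r q) x p :=
    fun p q r => by
      have h : (fun y => H y q r) =ᶠ[𝓝 x] fun y => -H y r q := hH.mono fun y hy => hy q r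
      rw [h.fderiv_eq, fderiv_fun_neg, neg_apply]
  have hHx := hH.self_of_nhds
  simp only [d2, cyclicSum, covDer2]
  rw [hswap b c a, hΓ b a, hΓ c a, hΓ c b, hHx c (Γ x a b), hHx (Γ x a c) b, hHx a (Γ x b c)]
  ring

end CovariantDerivative

section Hypercomplex

variable {V : Type*} [NormedAddCommGroup V] [NormedSpace ℝ V] {U : Set V} {x : V}

theorem IsHypercomplexOn.isQuaternionic {I J K : V → V →L[ℝ] V} (h : IsHypercomplexOn U I J K)
    (hx : x ∈ U) : IsQuaternionic (I x) (J x) (K x) :=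
  ⟨h.acsI.square x hx, h.acsJ.square x hx, h.mulIJ x hx, h.mulJI x hx⟩

theorem IsAcsOn.differentiableAt {L : V → V →L[ℝ] V} (h : IsAcsOn U L) (hU : U ∈ 𝓝 x) :
    DifferentiableAt ℝ L x :=
  (h.smooth.contDiffAt hU).differentiableAt (by simp)

theorem DClosed2On.d2_eq_sum_J {I J K : V → V →L[ℝ] V} {F : V → V → V → ℝ}
    (h : DClosed2On U I J K F) (hx : x ∈ U) (u v w : V) :
    d2 F x u v w = d2 F x (J x u) (J x v) w + d2 F x (J x u) v (J x w)
      + d2 F x u (J x v) (J x w) := by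
  simpa [unitCombo] using h x hx 0 1 0 (by norm_num) u v w

theorem apply_left_antisymm_of_antiInvariant {B : V →ₗ[ℝ] V →ₗ[ℝ] ℝ} (hB : B.IsAlt)
    {j : V →L[ℝ] V} (hj : ∀ v, j (j v) = -v) (hBj : ∀ p q, B (j p) (j q) = -B p q) (p q : V) :
    B (j p) q = -B (j q) p := by
  rw [← hB.neg, ← hBj (j q) p, hj, map_neg, LinearMap.neg_apply]

end Hypercomplex

section SalamonForm

variable {V : Type*} [NormedAddCommGroup V] [NormedSpace ℝ V] [FiniteDimensional ℝ V]
  {U : Set V} {x : V} {I J K : V → V →L[ℝ] V} {Γ : V → V →L[ℝ] V →L[ℝ] V}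
  {F : V → V →ₗ[ℝ] V →ₗ[ℝ] ℝ}

theorem covDer2_apply_I_apply_I (hU : U ∈ 𝓝 x) (hhc : IsHypercomplexOn U I J K)
    (hOb : IsObataOn U I J K Γ)
    (hF : DifferentiableAt ℝ (fun y => (F y).toContinuousBilinearMap) x)
    (hFI : ∀ y ∈ U, ∀ u v, F y (I y u) (I y v) = F y u v) (a b c : V) :
    covDer2 Γ (fun y p q => F y p q) x a (I x b) (I x c) =
      covDer2 Γ (fun y p q => F y p q) x a b c := by
  simpa using covDer2_eq_mul_of_invariant hF (hhc.acsI.differentiableAt hU)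
    (hOb.parI x (mem_of_mem_nhds hU)) (ε := 1)
    (eventually_of_mem hU fun y hy p q => by rw [hFI y hy, one_mul]) a b c

theorem covDer2_apply_J_apply_J (hU : U ∈ 𝓝 x) (hhc : IsHypercomplexOn U I J K)
    (hOb : IsObataOn U I J K Γ)
    (hF : DifferentiableAt ℝ (fun y => (F y).toContinuousBilinearMap) x)
    (hFJ : ∀ y ∈ U, ∀ u v, F y (J y u) (J y v) = -F y u v) (a b c : V) :
    covDer2 Γ (fun y p q => F y p q) x a (J x b) (J x c) =
      -covDer2 Γ (fun y p q => F y p q) x a b c := by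
  simpa using covDer2_eq_mul_of_invariant hF (hhc.acsJ.differentiableAt hU)
    (hOb.parJ x (mem_of_mem_nhds hU)) (ε := -1)
    (eventually_of_mem hU fun y hy p q => by rw [hFJ y hy, neg_one_mul]) a b c

theorem d2_apply_I_eq_cyclicSum (hU : U ∈ 𝓝 x) (hhc : IsHypercomplexOn U I J K)
    (hOb : IsObataOn U I J K Γ)
    (hF : DifferentiableAt ℝ (fun y => (F y).toContinuousBilinearMap) x)
    (hFalt : ∀ y ∈ U, ∀ u, F y u u = 0) (hFI : ∀ y ∈ U, ∀ u v, F y (I y u) (I y v) = F y u v)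
    (hFJ : ∀ y ∈ U, ∀ u v, F y (J y u) (J y v) = -F y u v)
    (hDF : DClosed2On U I J K (fun y u v => F y u v)) (u v w : V) :
    d2 (fun y p q => F y p q) x (I x u) (I x v) (I x w) =
      cyclicSum (fun a b c => covDer2 Γ (fun y p q => F y p q) x (K x a) (K x b) (I x c))
        u v w := by
  have hx := mem_of_mem_nhds hU
  have hdF := d2_eq_cyclicSum_covDer2 (hOb.torsionFree x hx)
    (eventually_of_mem hU fun y hy p q => (LinearMap.IsAlt.neg (hFalt y hy) q p).symm)
  rw [hdF]
  exact (hhc.isQuaternionic hx).cyclicSum_i_eq_of_dClosed (covDer2_neg_left F)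
    (covDer2_neg_right F) (covDer2_apply_I_apply_I hU hhc hOb hF hFI)
    (covDer2_apply_J_apply_J hU hhc hOb hF hFJ)
    (fun a b c => by simpa only [hdF] using hDF.d2_eq_sum_J hx a b c) u v w

theorem d2_apply_K_eq_cyclicSum (hU : U ∈ 𝓝 x) (hhc : IsHypercomplexOn U I J K)
    (hOb : IsObataOn U I J K Γ)
    (hF : DifferentiableAt ℝ (fun y => (F y).toContinuousBilinearMap) x)
    (hFalt : ∀ y ∈ U, ∀ u, F y u u = 0) (hFI : ∀ y ∈ U, ∀ u v, F y (I y u) (I y v) = F y u v)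
    (hFJ : ∀ y ∈ U, ∀ u v, F y (J y u) (J y v) = -F y u v)
    {G : V → V → V → ℝ} (hG : ∀ y ∈ U, ∀ u v, G y u v = F y (J y u) v) (u v w : V) :
    d2 G x (K x u) (K x v) (K x w) =
      cyclicSum (fun a b c => covDer2 Γ (fun y p q => F y p q) x (K x a) (K x b) (I x c))
        u v w := by
  have hx := mem_of_mem_nhds hU
  have hGalt : ∀ᶠ y in 𝓝 x, ∀ p q, G y p q = -G y q p :=
    eventually_of_mem hU fun y hy p q => by
      rw [hG y hy, hG y hy, apply_left_antisymm_of_antiInvariant (hFalt y hy)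
        (hhc.acsJ.square y hy) (hFJ y hy)]
  -- `G = F(J·, 1·)`, with both `J` and `1` parallel.
  have hGF : ∀ᶠ y in 𝓝 x, ∀ p q, G y p q = F y (J y p) ((1 : V →L[ℝ] V) q) :=
    eventually_of_mem hU hG
  have hPG : ∀ a b c, covDer2 Γ G x a b c = covDer2 Γ (fun y p q => F y p q) x a (J x b) c :=
    fun a b c => by
      rw [covDer2_congr hGF, covDer2_comp_of_isParallelAt hF (hhc.acsJ.differentiableAt hU)
        (differentiableAt_const 1) (hOb.parJ x hx) isParallelAt_one]
      rfl
  rw [d2_eq_cyclicSum_covDer2 (hOb.torsionFree x hx) hGalt, funext₃ hPG]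
  exact (hhc.isQuaternionic hx).cyclicSum_j_k_eq (covDer2_neg_right F)
    (covDer2_apply_I_apply_I hU hhc hOb hF hFI) (covDer2_apply_J_apply_J hU hhc hOb hF hFJ) u v w

end SalamonForm

/-- Let `F` be a smooth Salamon `(1,1)`-form (`IF = F`, `JF = -F`) on a
hypercomplex manifold with `DF = 0`, let `∇^Ob` be the Obata connection and `G = F(J·,·)`.
Then `dF(IU,IV,IW) = ∇^Ob F(KU,KV,IW) + ∇^Ob F(KV,KW,IU) + ∇^Ob F(KW,KU,IV)
= dG(KU,KV,KW)`; in other words `I dF_I = K dF_K`, where `F_I = F` and `F_K = G`. -/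
theorem D_closed_one_one_form_gives_IdFI_eq_KdFK
    (U : Set E) (hU : IsOpen U) (I J K : E → E →L[ℝ] E)
    (hhc : IsHypercomplexOn U I J K)
    (F : E → E →ₗ[ℝ] E →ₗ[ℝ] ℝ)
    (hFsmooth : ∀ u v : E, ContDiffOn ℝ (⊤ : ℕ∞) (fun x => F x u v) U)
    (hFalt : ∀ x ∈ U, ∀ u, F x u u = 0)
    (hFI : ∀ x ∈ U, ∀ u v, F x (I x u) (I x v) = F x u v)
    (hFJ : ∀ x ∈ U, ∀ u v, F x (J x u) (J x v) = -F x u v)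
    (hDF : DClosed2On U I J K (fun x u v => F x u v))
    (ΓOb : E → E →L[ℝ] E →L[ℝ] E) (hOb : IsObataOn U I J K ΓOb)
    (G : E → E → E → ℝ) (hG : ∀ x ∈ U, ∀ u v, G x u v = F x (J x u) v) :
    ∀ x ∈ U, ∀ u v w,
      (d2 (fun y p q => F y p q) x (I x u) (I x v) (I x w)
          = covDer2 ΓOb (fun y p q => F y p q) x (K x u) (K x v) (I x w)
            + covDer2 ΓOb (fun y p q => F y p q) x (K x v) (K x w) (I x u)
            + covDer2 ΓOb (fun y p q => F y p q) x (K x w) (K x u) (I x v)) ∧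
      (d2 (fun y p q => F y p q) x (I x u) (I x v) (I x w)
          = d2 G x (K x u) (K x v) (K x w)) ∧
      (act3 I (d2 fun y p q => F y p q) x u v w = act3 K (d2 G) x u v w) := by
  intro x hx u v w
  have hxU : U ∈ 𝓝 x := hU.mem_nhds hx
  have hF : DifferentiableAt ℝ (fun y => (F y).toContinuousBilinearMap) x :=
    ((contDiffOn_toContinuousBilinearMap hFsmooth).contDiffAt hxU).differentiableAt (by simp)
  have hdF := d2_apply_I_eq_cyclicSum hxU hhc hOb hF hFalt hFI hFJ hDF u v w
  have hdG := d2_apply_K_eq_cyclicSum hxU hhc hOb hF hFalt hFI hFJ hG u v w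
  exact ⟨hdF, hdF.trans hdG.symm, by simp only [act3, hdF, hdG]⟩

end HKTPaper
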